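/- arXiv:0806.4975 — 2 statements merged into one kernel-verified Lean document; each statement's English description precedes it below -/
import Mathlib

section
/- Let λ > 1 be real and let x : ℕ → ℝ be a sequence with 0 < x(n) ≤ 1 for all n, with x(0) > 1/λ, and satisfying 1 − x(n+1) ≤ (1 − x(n))/(λ·x(n)) for all n ∈ ℕ. Then: (a) x is nondecreasing and x(n) → 1 as n → ∞; (b) the partial products ∏_{n=0}^{N−1} x(n) converge as N → ∞ to a strictly positive limit. Moreover, for every ε with 0 < ε < 1 − 1/λ there exists δ > 0, depending only on λ and ε, such that every such sequence with x(0) ≥ 1/λ + ε satisfies ∏_{n=0}^{∞} x(n) ≥ δ. -/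
/-!
As soon as `x 0 ≥ c > λ⁻¹`, the recursion gives `1 - x (n+1) ≤ 1 - x n`, so `x` stays above `c`,
and then `1 - x n` decays geometrically with ratio `(λ c)⁻¹ < 1`; hence `x n → 1` and
`∑ (1 - x n) ≤ c / (c - λ⁻¹)`. On `[c, 1]` one has `t ≥ exp (-(1 - t) / c)` (from `log t ≥ 1 - t⁻¹`),
so every partial product is at least `exp (-(c - λ⁻¹)⁻¹)`, a bound depending only on `λ` and `c`.
The partial products are nonincreasing, hence converge to a limit above this bound.
-/

open Filter Finset

theorem Real.exp_neg_one_sub_div_le {c t : ℝ} (hc : 0 < c) (hct : c ≤ t) (ht : t ≤ 1) :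
    Real.exp (-(1 - t) / c) ≤ t := by
  have htpos : 0 < t := hc.trans_le hct
  calc Real.exp (-(1 - t) / c) ≤ Real.exp (1 - t⁻¹) := by
        have hdiv : (1 - t) / t ≤ (1 - t) / c := div_le_div_of_nonneg_left (sub_nonneg.2 ht) hc hct
        have hinv : 1 - t⁻¹ = -((1 - t) / t) := by field_simp; ring
        rw [Real.exp_le_exp, hinv, neg_div]
        exact neg_le_neg hdiv
    _ ≤ Real.exp (Real.log t) := Real.exp_le_exp.2 (Real.one_sub_inv_le_log_of_pos htpos)
    _ = t := Real.exp_log htpos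

theorem Real.exp_neg_sum_div_le_prod {ι : Type*} (s : Finset ι) {a : ι → ℝ} {c : ℝ} (hc : 0 < c)
    (hca : ∀ i ∈ s, c ≤ a i) (ha : ∀ i ∈ s, a i ≤ 1) :
    Real.exp (-(∑ i ∈ s, (1 - a i)) / c) ≤ ∏ i ∈ s, a i := by
  rw [← sum_neg_distrib, sum_div, Real.exp_sum]
  exact prod_le_prod (fun _ _ => (Real.exp_pos _).le)
    fun i hi => Real.exp_neg_one_sub_div_le hc (hca i hi) (ha i hi)

/-- `x n` plays the role of the legality `LEG₁ [σⁿ γ]` and `lam` of the expansion factor. -/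
structure LegalitySeq (lam : ℝ) (x : ℕ → ℝ) : Prop where
  pos : ∀ n, 0 < x n
  le_one : ∀ n, x n ≤ 1
  one_sub_succ_le : ∀ n, 1 - x (n + 1) ≤ (1 - x n) / (lam * x n)

namespace LegalitySeq

variable {lam c : ℝ} {x : ℕ → ℝ}

theorem le_succ (hx : LegalitySeq lam x) {n : ℕ} (hn : 1 ≤ lam * x n) : x n ≤ x (n + 1) := by
  have := div_le_self (sub_nonneg.2 (hx.le_one n)) hn
  linarith [hx.one_sub_succ_le n]

theorem monotone (hx : LegalitySeq lam x) (hlam : 0 < lam) (h0 : lam⁻¹ ≤ x 0) : Monotone x := by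
  have step : ∀ n, lam⁻¹ ≤ x n → x n ≤ x (n + 1) := fun n hn =>
    hx.le_succ ((inv_le_iff_one_le_mul₀' hlam).1 hn)
  have above : ∀ n, lam⁻¹ ≤ x n := fun n =>
    Nat.rec h0 (fun n ih => ih.trans (step n ih)) n
  exact monotone_nat_of_le_succ fun n => step n (above n)

theorem le_apply (hx : LegalitySeq lam x) (hlam : 0 < lam) (hc : lam⁻¹ ≤ c) (h0 : c ≤ x 0)
    (n : ℕ) : c ≤ x n :=
  h0.trans (hx.monotone hlam (hc.trans h0) n.zero_le)

theorem one_sub_le_pow (hx : LegalitySeq lam x) (hlam : 0 < lam) (hc : lam⁻¹ ≤ c)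
    (h0 : c ≤ x 0) (n : ℕ) : 1 - x n ≤ (lam * c)⁻¹ ^ n * (1 - x 0) := by
  have hlc : 0 < lam * c := mul_pos hlam ((inv_pos.2 hlam).trans_le hc)
  induction n with
  | zero => simp
  | succ n ih =>
    calc 1 - x (n + 1) ≤ (1 - x n) / (lam * x n) := hx.one_sub_succ_le n
      _ ≤ (1 - x n) / (lam * c) := by
          gcongr
          exacts [sub_nonneg.2 (hx.le_one n), hx.le_apply hlam hc h0 n]
      _ ≤ (lam * c)⁻¹ ^ n * (1 - x 0) / (lam * c) := by gcongr
      _ = (lam * c)⁻¹ ^ (n + 1) * (1 - x 0) := by ring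

theorem tendsto_one (hx : LegalitySeq lam x) (hlam : 0 < lam) (h0 : lam⁻¹ < x 0) :
    Tendsto x atTop (nhds 1) := by
  have hr : (lam * x 0)⁻¹ < 1 := inv_lt_one_of_one_lt₀ ((inv_lt_iff_one_lt_mul₀' hlam).1 h0)
  have hx0 : 0 < x 0 := hx.pos 0
  have hgeom : Tendsto (fun n => 1 - (lam * x 0)⁻¹ ^ n * (1 - x 0)) atTop (nhds 1) := by
    simpa using ((tendsto_pow_atTop_nhds_zero_of_lt_one (by positivity) hr).mul_const
      (1 - x 0)).const_sub 1
  exact tendsto_of_tendsto_of_tendsto_of_le_of_le hgeom tendsto_const_nhds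
    (fun n => by linarith [hx.one_sub_le_pow hlam h0.le le_rfl n]) hx.le_one

theorem sum_one_sub_le (hx : LegalitySeq lam x) (hlam : 0 < lam) (hc : lam⁻¹ < c)
    (h0 : c ≤ x 0) (N : ℕ) : ∑ n ∈ range N, (1 - x n) ≤ c / (c - lam⁻¹) := by
  have hlc : 1 < lam * c := (inv_lt_iff_one_lt_mul₀' hlam).1 hc
  have hcpos : 0 < c := (inv_pos.2 hlam).trans hc
  have hx0 : 1 - x 0 ≤ 1 := by linarith [hx.pos 0]
  calc ∑ n ∈ range N, (1 - x n) ≤ ∑ n ∈ range N, (lam * c)⁻¹ ^ n := by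
        gcongr with n
        exact (hx.one_sub_le_pow hlam hc.le h0 n).trans
          (mul_le_of_le_one_right (by positivity) hx0)
    _ ≤ ((lam * c)⁻¹) ^ 0 / (1 - (lam * c)⁻¹) := by
        rw [range_eq_Ico]; exact geom_sum_Ico_le_of_lt_one (by positivity) (inv_lt_one_of_one_lt₀ hlc)
    _ = c / (c - lam⁻¹) := by
        have : lam * c - 1 ≠ 0 := (sub_pos.2 hlc).ne'
        field_simp

theorem exp_neg_inv_le_prod (hx : LegalitySeq lam x) (hlam : 0 < lam) (hc : lam⁻¹ < c)
    (h0 : c ≤ x 0) (N : ℕ) : Real.exp (-(c - lam⁻¹)⁻¹) ≤ ∏ n ∈ range N, x n := by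
  have hcpos : 0 < c := (inv_pos.2 hlam).trans hc
  calc Real.exp (-(c - lam⁻¹)⁻¹) ≤ Real.exp (-(∑ n ∈ range N, (1 - x n)) / c) := by
        rw [Real.exp_le_exp, neg_div, neg_le_neg_iff, div_le_iff₀ hcpos, inv_mul_eq_div]
        exact hx.sum_one_sub_le hlam hc h0 N
    _ ≤ ∏ n ∈ range N, x n := Real.exp_neg_sum_div_le_prod _ hcpos
        (fun n _ => hx.le_apply hlam hc.le h0 n) fun n _ => hx.le_one n

theorem antitone_prod (hx : LegalitySeq lam x) : Antitone fun N => ∏ n ∈ range N, x n :=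
  antitone_nat_of_succ_le fun N => by
    rw [prod_range_succ]
    exact mul_le_of_le_one_right (prod_nonneg fun n _ => (hx.pos n).le) (hx.le_one N)

theorem exists_tendsto_prod (hx : LegalitySeq lam x) (hlam : 0 < lam) (h0 : lam⁻¹ < x 0) :
    ∃ L, 0 < L ∧ Tendsto (fun N => ∏ n ∈ range N, x n) atTop (nhds L) := by
  have hbound := hx.exp_neg_inv_le_prod hlam h0 le_rfl
  exact ⟨_, (Real.exp_pos _).trans_le (le_ciInf hbound),
    tendsto_atTop_ciInf hx.antitone_prod ⟨_, Set.forall_mem_range.2 hbound⟩⟩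

end LegalitySeq

/-- Convergence of legality: if `0 < x(n) ≤ 1`, `x(0) > 1/λ` and
`1 − x(n+1) ≤ (1 − x(n))/(λ·x(n))` with `λ > 1`, then `x` is nondecreasing with
`x(n) → 1`, and the partial products `∏_{n<N} x(n)` converge to a strictly
positive limit.  Moreover, for every `0 < ε < 1 − 1/λ` there is a `δ > 0`,
depending only on `λ` and `ε`, such that every such sequence with
`x(0) ≥ 1/λ + ε` has infinite product at least `δ`. -/
theorem legality_converges (lam : ℝ) (hlam : 1 < lam) :
    (∀ x : ℕ → ℝ, (∀ n, 0 < x n) → (∀ n, x n ≤ 1) → 1 / lam < x 0 →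
      (∀ n : ℕ, 1 - x (n + 1) ≤ (1 - x n) / (lam * x n)) →
      (Monotone x ∧ Tendsto x atTop (nhds 1)) ∧
      (∃ L : ℝ, 0 < L ∧
        Tendsto (fun N : ℕ => ∏ n ∈ Finset.range N, x n) atTop (nhds L))) ∧
    (∀ ε : ℝ, 0 < ε → ε < 1 - 1 / lam →
      ∃ δ : ℝ, 0 < δ ∧
        ∀ x : ℕ → ℝ, (∀ n, 0 < x n) → (∀ n, x n ≤ 1) →
          (∀ n : ℕ, 1 - x (n + 1) ≤ (1 - x n) / (lam * x n)) →
          1 / lam + ε ≤ x 0 →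
          ∀ L : ℝ, Tendsto (fun N : ℕ => ∏ n ∈ Finset.range N, x n) atTop (nhds L) →
            δ ≤ L) := by
  have hlam0 : 0 < lam := zero_lt_one.trans hlam
  simp only [one_div]
  refine ⟨fun x hpos hle h0 hrec => ?_, fun ε hε _ => ⟨Real.exp (-ε⁻¹), Real.exp_pos _, ?_⟩⟩
  · have hx : LegalitySeq lam x := ⟨hpos, hle, hrec⟩
    exact ⟨⟨hx.monotone hlam0 h0.le, hx.tendsto_one hlam0 h0⟩, hx.exists_tendsto_prod hlam0 h0⟩
  · intro x hpos hle hrec h0 L hL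
    have hx : LegalitySeq lam x := ⟨hpos, hle, hrec⟩
    refine ge_of_tendsto' hL fun N => ?_
    simpa using hx.exp_neg_inv_le_prod hlam0 (lt_add_of_pos_right _ hε) h0 N
end

section
/- Let λ > 1 and B ≥ 0 be real numbers and let ε satisfy 0 < ε < 1 − 1/λ. Then there exists a constant K > 0, depending only on λ, B and ε, with the following property: for every sequence ℓ : ℕ → ℝ with ℓ(n) > 0 for all n and every nonincreasing sequence I : ℕ → ℝ with I(n) ≥ 0 for all n, if ℓ(n+1) ≥ λ·ℓ(n) − 2B·I(n) for all n and (ℓ(0) − 2λ⁻¹·B·I(0))/ℓ(0) ≥ 1/λ + ε, then ℓ(n) ≥ K·λⁿ·ℓ(0) for all n ∈ ℕ. -/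
/-! With `a = 2B·I(0)`, monotonicity of `I` turns the recurrence into `ℓ(n+1) ≥ λ·ℓ(n) − a`,
whose deviation from the fixed point `p = a/(λ−1)` grows at least geometrically:
`ℓ(n) − p ≥ λⁿ (ℓ(0) − p)`. Legality says exactly that `ℓ(0) − p ≥ λε/(λ−1) · ℓ(0)`,
and `p ≥ 0`, so `K = λε/(λ−1)` works. -/

theorem pow_mul_sub_div_le_sub_div {r c : ℝ} {u : ℕ → ℝ} (hr0 : 0 ≤ r) (hr1 : r ≠ 1)
    (h : ∀ n, r * u n - c ≤ u (n + 1)) (n : ℕ) :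
    r ^ n * (u 0 - c / (r - 1)) ≤ u n - c / (r - 1) := by
  have hfix : r * (c / (r - 1)) - c / (r - 1) = c := by
    field_simp [sub_ne_zero.mpr hr1]
  refine geom_le (u := fun k => u k - c / (r - 1)) hr0 n fun k _ => ?_
  linarith [h k]

theorem mul_le_sub_div_of_legality {lam a eps L : ℝ} (hlam : 1 < lam) (hL : 0 < L)
    (hleg : 1 / lam + eps ≤ (L - lam⁻¹ * a) / L) :
    lam * eps / (lam - 1) * L ≤ L - a / (lam - 1) := by
  have hlam0 : 0 < lam := by linarith
  have ha : a ≤ (lam - 1 - lam * eps) * L := by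
    rw [le_div_iff₀ hL] at hleg
    have := mul_le_mul_of_nonneg_left hleg hlam0.le
    field_simp at this
    linarith
  rw [div_mul_eq_mul_div, div_le_iff₀ (by linarith), sub_mul, div_mul_cancel₀ _ (by linarith)]
  linarith

theorem legality_lower_bound_general (lam B eps : ℝ) (hlam : 1 < lam) (hB : 0 ≤ B)
    (heps1 : 0 < eps) :
    ∃ K : ℝ, 0 < K ∧
      ∀ l I : ℕ → ℝ, (∀ n, 0 < l n) → (∀ n, 0 ≤ I n) → Antitone I →
        (∀ n : ℕ, lam * l n - 2 * B * I n ≤ l (n + 1)) →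
        1 / lam + eps ≤ (l 0 - 2 * lam⁻¹ * B * I 0) / l 0 →
        ∀ n : ℕ, K * lam ^ n * l 0 ≤ l n := by
  have hlam1 : 0 < lam - 1 := by linarith
  refine ⟨lam * eps / (lam - 1), by positivity, fun l I hl hI hIanti hrec hleg n => ?_⟩
  set a := 2 * B * I 0
  have hrec' : ∀ m, lam * l m - a ≤ l (m + 1) := fun m => by
    have : 2 * B * I m ≤ a := mul_le_mul_of_nonneg_left (hIanti m.zero_le) (by linarith)
    linarith [hrec m]
  have hl0 : lam * eps / (lam - 1) * l 0 ≤ l 0 - a / (lam - 1) :=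
    mul_le_sub_div_of_legality hlam (hl 0) (by convert hleg using 3; ring)
  have hp : 0 ≤ a / (lam - 1) := by have := hI 0; positivity
  calc lam * eps / (lam - 1) * lam ^ n * l 0
      = lam ^ n * (lam * eps / (lam - 1) * l 0) := by ring
    _ ≤ lam ^ n * (l 0 - a / (lam - 1)) := by gcongr
    _ ≤ l n - a / (lam - 1) := pow_mul_sub_div_le_sub_div (by linarith) hlam.ne' hrec' n
    _ ≤ l n := by linarith

/-- Abstract form of Corollary 6.9: if `λ > 1`, `B ≥ 0` and `0 < ε < 1 − 1/λ`,
then there is a constant `K > 0`, depending only on `λ`, `B` and `ε`, such that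
for all positive sequences `ℓ` and nonnegative nonincreasing sequences `I` with
`ℓ(n+1) ≥ λ·ℓ(n) − 2B·I(n)` and legality `(ℓ(0) − 2λ⁻¹·B·I(0))/ℓ(0) ≥ 1/λ + ε`,
one has `ℓ(n) ≥ K·λⁿ·ℓ(0)` for all `n`. -/
theorem legality_lower_bound (lam B eps : ℝ) (hlam : 1 < lam) (hB : 0 ≤ B)
    (heps1 : 0 < eps) (heps2 : eps < 1 - 1 / lam) :
    ∃ K : ℝ, 0 < K ∧
      ∀ l I : ℕ → ℝ, (∀ n, 0 < l n) → (∀ n, 0 ≤ I n) → Antitone I →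
        (∀ n : ℕ, lam * l n - 2 * B * I n ≤ l (n + 1)) →
        1 / lam + eps ≤ (l 0 - 2 * lam⁻¹ * B * I 0) / l 0 →
        ∀ n : ℕ, K * lam ^ n * l 0 ≤ l n :=
  legality_lower_bound_general lam B eps hlam hB heps1
end
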